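/- Every plactic monoid of finite rank n is right reversible: for all u, v ∈ P_n there exist X, Y ∈ P_n with Xu = Yv. -/

import Mathlib

/-!
Let `K = (n-1)(n-2)⋯0` be the full column and `cᵢ` its prefix of length `i`. Knuth's second
relation alone lets a letter `b` travel left through a decreasing word of smaller letters up to
another `b`; hence any two prefixes of a strictly decreasing word commute, so the columns `cᵢ`
commute pairwise. Let `σ = c₀ c₁ ⋯ cₙ`. Since `c_{n-a} = c_{n-1-a} a`, every letter `a` is a
right divisor of `σ` with a cofactor that is a product of columns, hence commutes with `σ`.
By induction on length, every element then has a power of `σ` as a left multiple, and any two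
powers of `σ` have a common left multiple.
-/

/-- The Knuth relations on words over the alphabet `Fin n`:
`xzy = zxy` for `x ≤ y < z` and `yxz = yzx` for `x < y ≤ z`. -/
def KnuthRel (n : ℕ) : FreeMonoid (Fin n) → FreeMonoid (Fin n) → Prop := fun a b =>
  (∃ x y z : Fin n, x ≤ y ∧ y < z ∧
      a = FreeMonoid.of x * FreeMonoid.of z * FreeMonoid.of y ∧
      b = FreeMonoid.of z * FreeMonoid.of x * FreeMonoid.of y) ∨
  (∃ x y z : Fin n, x < y ∧ y ≤ z ∧
      a = FreeMonoid.of y * FreeMonoid.of x * FreeMonoid.of z ∧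
      b = FreeMonoid.of y * FreeMonoid.of z * FreeMonoid.of x)

/-- The plactic monoid of rank `n`, presented by generators `Fin n` and the
Knuth relations. -/
def Plactic (n : ℕ) := (conGen (KnuthRel n)).Quotient

instance (n : ℕ) : Monoid (Plactic n) :=
  inferInstanceAs (Monoid (conGen (KnuthRel n)).Quotient)

/-- The canonical projection from the free monoid to the plactic monoid. -/
def Plactic.mk (n : ℕ) : FreeMonoid (Fin n) →* Plactic n := Con.mk' _

theorem Submonoid.exists_mul_eq_pow_of_closure_eq_top {M : Type*} [Monoid M] {s : Set M}
    (hs : Submonoid.closure s = ⊤) {σ : M} (h : ∀ a ∈ s, ∃ z, Commute z σ ∧ z * a = σ) (x : M) :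
    ∃ (y : M) (k : ℕ), y * x = σ ^ k := by
  induction x using Submonoid.induction_of_closure_eq_top_right hs with
  | one => exact ⟨1, 0, by simp⟩
  | mul_right x a ha ih =>
    obtain ⟨y, k, hy⟩ := ih
    obtain ⟨z, hzσ, hz⟩ := h a ha
    refine ⟨z * y, k + 1, ?_⟩
    calc z * y * (x * a) = z * σ ^ k * a := by rw [← hy]; simp only [mul_assoc]
      _ = σ ^ k * (z * a) := by rw [(hzσ.pow_right k).eq, mul_assoc]
      _ = σ ^ (k + 1) := by rw [hz, pow_succ]

theorem Submonoid.exists_mul_eq_mul_of_closure_eq_top {M : Type*} [Monoid M] {s : Set M}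
    (hs : Submonoid.closure s = ⊤) {σ : M} (h : ∀ a ∈ s, ∃ z, Commute z σ ∧ z * a = σ)
    (u v : M) : ∃ X Y : M, X * u = Y * v := by
  obtain ⟨x, k, hx⟩ := exists_mul_eq_pow_of_closure_eq_top hs h u
  obtain ⟨y, m, hy⟩ := exists_mul_eq_pow_of_closure_eq_top hs h v
  refine ⟨σ ^ m * x, σ ^ k * y, ?_⟩
  rw [mul_assoc, hx, mul_assoc, hy, ← pow_add, ← pow_add, add_comm]

namespace Plactic

variable {n : ℕ}

def ofList (w : List (Fin n)) : Plactic n := mk n (FreeMonoid.ofList w)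

theorem ofList_append (u v : List (Fin n)) : ofList (u ++ v) = ofList u * ofList v := by
  simp [ofList]

theorem closure_range_ofList_singleton :
    Submonoid.closure (Set.range fun a : Fin n ↦ ofList [a]) = ⊤ := by
  have h : (Submonoid.closure (Set.range FreeMonoid.of)).map (mk n) = ⊤ := by
    rw [FreeMonoid.closure_range_of, ← MonoidHom.mrange_eq_map, MonoidHom.mrange_eq_top]
    exact Con.mk'_surjective
  rwa [MonoidHom.map_mclosure, ← Set.range_comp] at h

theorem ofList_knuth_yxz {x y z : Fin n} (hxy : x < y) (hyz : y ≤ z) :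
    ofList [y, x, z] = ofList [y, z, x] :=
  (Con.eq _).mpr (ConGen.Rel.of _ _ (Or.inr ⟨x, y, z, hxy, hyz, rfl, rfl⟩))

theorem ofList_cons_append_singleton {y b : Fin n} {C : List (Fin n)}
    (hC : C.Pairwise (· > ·)) (hCy : ∀ c ∈ C, c < y) (hyb : y ≤ b) :
    ofList (y :: (C ++ [b])) = ofList (y :: b :: C) := by
  induction C generalizing y with
  | nil => rfl
  | cons x C ih =>
    rw [List.pairwise_cons] at hC
    have hxy : x < y := hCy x List.mem_cons_self
    calc ofList (y :: x :: (C ++ [b])) = ofList [y] * ofList (x :: (C ++ [b])) :=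
          ofList_append [y] _
      _ = ofList [y] * ofList (x :: b :: C) := by rw [ih hC.2 hC.1 (hxy.le.trans hyb)]
      _ = ofList [y, x, b] * ofList C := by
          simp only [← ofList_append, List.cons_append, List.nil_append]
      _ = ofList [y, b, x] * ofList C := by rw [ofList_knuth_yxz hxy hyb]
      _ = ofList (y :: b :: x :: C) := by
          simp only [← ofList_append, List.cons_append, List.nil_append]

theorem commute_ofList_append {B C : List (Fin n)} (h : (B ++ C).Pairwise (· > ·)) :
    Commute (ofList B) (ofList (B ++ C)) := by
  induction B with
  | nil => exact Commute.one_left _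
  | cons b B ih =>
    rw [List.cons_append, List.pairwise_cons] at h
    have hB : B.Pairwise (· > ·) := h.2.sublist (List.sublist_append_left B C)
    have hbBC := ofList_cons_append_singleton h.2 h.1 le_rfl
    have hbB :=
      ofList_cons_append_singleton hB (fun c hc ↦ h.1 c (List.mem_append_left C hc)) le_rfl
    calc ofList (b :: B) * ofList (b :: B ++ C)
        = ofList (b :: (B ++ [b])) * ofList (B ++ C) := by
          simp only [← ofList_append, List.cons_append, List.nil_append, List.append_assoc]
      _ = ofList [b, b] * (ofList B * ofList (B ++ C)) := by
          rw [hbB]; simp only [← ofList_append, List.cons_append, List.nil_append]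
      _ = ofList [b, b] * (ofList (B ++ C) * ofList B) := by rw [(ih h.2).eq]
      _ = ofList (b :: (B ++ C ++ [b])) * ofList B := by
          rw [hbBC]; simp only [← ofList_append, List.cons_append, List.nil_append]
      _ = ofList (b :: B ++ C) * ofList (b :: B) := by
          simp only [← ofList_append, List.cons_append, List.nil_append, List.append_assoc]

theorem commute_ofList_take {w : List (Fin n)} (hw : w.Pairwise (· > ·)) (i j : ℕ) :
    Commute (ofList (w.take i)) (ofList (w.take j)) := by
  wlog hij : i ≤ j generalizing i j
  · exact (this j i (le_of_not_ge hij)).symm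
  have hj := (List.take_append_drop i (w.take j)).symm
  rw [List.take_take, min_eq_left hij] at hj
  rw [hj]
  exact commute_ofList_append (hj ▸ hw.sublist (List.take_sublist j w))

variable (n) in
def column (i : ℕ) : Plactic n := ofList ((List.finRange n).reverse.take i)

theorem commute_column (i j : ℕ) : Commute (column n i) (column n j) :=
  commute_ofList_take (List.sortedLT_finRange n).reverse.pairwise i j

theorem column_sub_val_eq_mul (a : Fin n) : column n (n - a) = column n (n - 1 - a) * ofList [a] := by
  have h : n - a = n - 1 - a + 1 := by omega
  rw [column, column, ← ofList_append, h, List.take_add_one,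
    List.getElem?_eq_getElem (by simp; omega), Option.toList_some]
  congr
  ext
  simp only [List.getElem_reverse, List.length_finRange, List.getElem_finRange, Fin.val_cast]
  omega

variable (n) in
def prodColumns : Plactic n :=
  (Finset.range (n + 1)).noncommProd (column n) fun i _ j _ _ ↦ commute_column i j

theorem commute_column_prodColumns (i : ℕ) : Commute (column n i) (prodColumns n) :=
  Finset.noncommProd_commute _ _ _ _ fun j _ ↦ commute_column i j

theorem exists_commute_mul_eq_prodColumns (a : Fin n) :
    ∃ z, Commute z (prodColumns n) ∧ z * ofList [a] = prodColumns n := by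
  have ha : n - a ∈ Finset.range (n + 1) := Finset.mem_range.mpr (by omega)
  refine ⟨((Finset.range (n + 1)).erase (n - a)).noncommProd (column n)
    (fun i _ j _ _ ↦ commute_column i j) * column n (n - 1 - a), ?_, ?_⟩
  · refine Commute.mul_left ?_ (commute_column_prodColumns _)
    exact (Finset.noncommProd_commute _ _ _ _
      fun j _ ↦ (commute_column_prodColumns j).symm).symm
  · rw [mul_assoc, ← column_sub_val_eq_mul]
    exact Finset.noncommProd_erase_mul _ ha _ _

end Plactic

/-- The plactic monoid of any finite rank is right reversible: any two
principal left ideals intersect. -/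
theorem plactic_right_reversible (n : ℕ) (u v : Plactic n) :
    ∃ X Y : Plactic n, X * u = Y * v :=
  Submonoid.exists_mul_eq_mul_of_closure_eq_top Plactic.closure_range_ofList_singleton
    (by rintro _ ⟨a, rfl⟩; exact Plactic.exists_commute_mul_eq_prodColumns a) u v
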